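/- In the condition characterizing feasibility (∑_S α_S y_S ≤ ∑_{(i,j)} max_{S⊙(i,j)} α_S · π_{ij} for all α: 2^V → ℝ≥0), it suffices to check α's that take only one positive value on their support; equivalently, it suffices to check, for every family 𝕊 ⊆ 2^V, the inequality ∑_{S∈𝕊} y_S ≤ ∑_{(i,j): 𝕊⊙(i,j)} π_{ij}. -/

import Mathlib

open Finset

/-- `S` separates the pair `(i, j)` if it contains exactly one of `i`, `j`. -/
def SepSet {V : Type*} (S : Finset V) (i j : V) : Prop :=
  (i ∈ S ∧ j ∉ S) ∨ (i ∉ S ∧ j ∈ S)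

/-- A family `𝕊` of subsets separates `(i, j)` if some member of `𝕊` does. -/
def SepFam {V : Type*} (𝕊 : Finset (Finset V)) (i j : V) : Prop :=
  ∃ S ∈ 𝕊, SepSet S i j

instance {V : Type*} [DecidableEq V] (S : Finset V) (i j : V) :
    Decidable (SepSet S i j) := by unfold SepSet; infer_instance

instance {V : Type*} [DecidableEq V] (𝕊 : Finset (Finset V)) (i j : V) :
    Decidable (SepFam 𝕊 i j) := by unfold SepFam; infer_instance

/-- `max_{S : S ⊙ (i,j)} α_S`, with the maximum over the empty set taken to be `0`. -/
noncomputable def maxSep {V : Type*} [Fintype V] [DecidableEq V]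
    (α : Finset V → ℝ) (i j : V) : ℝ :=
  (insert (0 : ℝ) ((Finset.univ.filter (fun S : Finset V => SepSet S i j)).image α)).max'
    (Finset.insert_nonempty _ _)

/-!
Layer cake: subtracting the least positive value `m` of `α ≥ 0` on its support `𝕊` writes
`α = β + m • 𝟙_𝕊` with `β ≥ 0` supported in a proper subfamily of `𝕊`. Both sides of the
inequality are additive along this split, because the maximum over separating sets of
`β + m • 𝟙_𝕊` is that of `β` plus `m` exactly when `𝕊` separates the pair. Induction on the size
of the support thus reduces every `α` to indicators of families, and conversely indicators are
particular `α`'s.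
-/

section MaxSep

variable {V : Type*} [Fintype V] [DecidableEq V]

lemma maxSep_nonneg (α : Finset V → ℝ) (i j : V) : 0 ≤ maxSep α i j :=
  le_max' _ _ (mem_insert_self _ _)

lemma le_maxSep {α : Finset V → ℝ} {i j : V} {S : Finset V} (h : SepSet S i j) :
    α S ≤ maxSep α i j :=
  le_max' _ _ (mem_insert_of_mem (mem_image_of_mem _ (by simp [h])))

lemma maxSep_le {α : Finset V → ℝ} {i j : V} {c : ℝ} (hc : 0 ≤ c)
    (h : ∀ S, SepSet S i j → α S ≤ c) : maxSep α i j ≤ c := by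
  refine max'_le _ _ _ fun x hx => ?_
  rcases mem_insert.mp hx with rfl | hx
  · exact hc
  · obtain ⟨S, hS, rfl⟩ := mem_image.mp hx
    exact h S (by simpa using hS)

lemma maxSep_congr {α β : Finset V → ℝ} {i j : V} (h : ∀ S, SepSet S i j → α S = β S) :
    maxSep α i j = maxSep β i j := by
  unfold maxSep
  congr 2
  exact image_congr fun S hS => h S (by simpa using hS)

lemma maxSep_zero (i j : V) : maxSep (fun _ => 0) i j = 0 :=
  le_antisymm (maxSep_le le_rfl fun _ _ => le_rfl) (maxSep_nonneg _ i j)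

/-- Since `β` vanishes off `𝕊`, a separating set outside `𝕊` contributes only `0 ≤ c`, so the
maximum is attained inside `𝕊` whenever `𝕊` separates `(i, j)`. -/
lemma maxSep_add_indicator {β : Finset V → ℝ} {𝕊 : Finset (Finset V)} {c : ℝ}
    (hβ : ∀ S, 0 ≤ β S) (hβ𝕊 : ∀ S ∉ 𝕊, β S = 0) (hc : 0 ≤ c) (i j : V) :
    maxSep (fun S => β S + if S ∈ 𝕊 then c else 0) i j =
      maxSep β i j + if SepFam 𝕊 i j then c else 0 := by
  by_cases hsep : SepFam 𝕊 i j
  · obtain ⟨S₀, hS₀, hsepS₀⟩ := hsep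
    have hc_le : c ≤ maxSep (fun S => β S + if S ∈ 𝕊 then c else 0) i j := by
      have := le_maxSep (α := fun S => β S + if S ∈ 𝕊 then c else 0) hsepS₀
      simp only [hS₀, if_true] at this
      linarith [hβ S₀]
    rw [if_pos ⟨S₀, hS₀, hsepS₀⟩]
    refine le_antisymm ?_ ?_
    · refine maxSep_le (by linarith [maxSep_nonneg β i j]) fun S hS => ?_
      by_cases hS𝕊 : S ∈ 𝕊
      · simpa [hS𝕊] using le_maxSep (α := β) hS
      · simpa [hS𝕊, hβ𝕊 S hS𝕊] using add_nonneg (maxSep_nonneg β i j) hc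
    · refine le_sub_iff_add_le.mp (maxSep_le (by linarith) fun S hS => ?_)
      have := le_maxSep (α := fun S => β S + if S ∈ 𝕊 then c else 0) hS
      by_cases hS𝕊 : S ∈ 𝕊
      · simp only [hS𝕊, if_true] at this
        linarith
      · rw [hβ𝕊 S hS𝕊]
        linarith
  · rw [if_neg hsep, add_zero]
    refine maxSep_congr fun S hS => ?_
    have hS𝕊 : S ∉ 𝕊 := fun h => hsep ⟨S, h, hS⟩
    simp [hS𝕊]

lemma maxSep_indicator (𝕊 : Finset (Finset V)) {c : ℝ} (hc : 0 ≤ c) (i j : V) :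
    maxSep (fun S => if S ∈ 𝕊 then c else 0) i j = if SepFam 𝕊 i j then c else 0 := by
  simpa [maxSep_zero] using
    maxSep_add_indicator (β := fun _ => 0) (fun _ => le_rfl) (fun _ _ => rfl) hc i j

lemma sum_add_indicator_mul (β y : Finset V → ℝ) (𝕊 : Finset (Finset V)) (c : ℝ) :
    ∑ S, (β S + if S ∈ 𝕊 then c else 0) * y S = ∑ S, β S * y S + c * ∑ S ∈ 𝕊, y S := by
  simp only [add_mul, ite_mul, zero_mul, sum_add_distrib, sum_ite_mem, univ_inter, mul_sum]

lemma sum_maxSep_add_indicator_mul {β : Finset V → ℝ} {𝕊 : Finset (Finset V)} {c : ℝ}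
    (hβ : ∀ S, 0 ≤ β S) (hβ𝕊 : ∀ S ∉ 𝕊, β S = 0) (hc : 0 ≤ c) (π : V → V → ℝ) :
    ∑ i, ∑ j, maxSep (fun S => β S + if S ∈ 𝕊 then c else 0) i j * π i j =
      ∑ i, ∑ j, maxSep β i j * π i j +
        c * ∑ i, ∑ j, if SepFam 𝕊 i j then π i j else 0 := by
  simp only [maxSep_add_indicator hβ hβ𝕊 hc, add_mul, ite_mul, zero_mul, sum_add_distrib,
    mul_sum, mul_ite, mul_zero]

theorem sum_mul_le_sum_maxSep_mul {y : Finset V → ℝ} {π : V → V → ℝ}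
    (h : ∀ 𝕊 : Finset (Finset V),
      ∑ S ∈ 𝕊, y S ≤ ∑ i, ∑ j, if SepFam 𝕊 i j then π i j else 0)
    (α : Finset V → ℝ) (hα : ∀ S, 0 ≤ α S) :
    ∑ S, α S * y S ≤ ∑ i, ∑ j, maxSep α i j * π i j := by
  induction hn : #({S | 0 < α S} : Finset (Finset V)) using Nat.strong_induction_on
    generalizing α with
  | _ n ih =>
  set 𝕊 : Finset (Finset V) := {S | 0 < α S} with h𝕊
  have hα𝕊 : ∀ S ∉ 𝕊, α S = 0 := fun S hS =>
    le_antisymm (not_lt.mp (by simpa [h𝕊] using hS)) (hα S)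
  rcases 𝕊.eq_empty_or_nonempty with h𝕊₀ | h𝕊₀
  · have hα₀ : α = fun _ => 0 := funext fun S => hα𝕊 S (by simp [h𝕊₀])
    simp [hα₀, maxSep_zero]
  obtain ⟨S₀, hS₀, hmin⟩ := exists_min_image 𝕊 α h𝕊₀
  set m := α S₀
  have hm : 0 < m := by simpa [h𝕊] using hS₀
  set β : Finset V → ℝ := fun S => if S ∈ 𝕊 then α S - m else 0 with hβdef
  have hβ : ∀ S, 0 ≤ β S := fun S => by
    by_cases hS : S ∈ 𝕊
    · simpa [hβdef, hS] using hmin S hS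
    · simp [hβdef, hS]
  have hβ𝕊 : ∀ S ∉ 𝕊, β S = 0 := fun S hS => by simp [hβdef, hS]
  have hsplit : α = fun S => β S + if S ∈ 𝕊 then m else 0 := funext fun S => by
    by_cases hS : S ∈ 𝕊
    · simp [hβdef, hS]
    · simp [hβdef, hS, hα𝕊 S hS]
  have hsupp : ({S | 0 < β S} : Finset (Finset V)) ⊂ 𝕊 := by
    refine (?_ : _ ⊆ 𝕊.erase S₀).trans_ssubset (erase_ssubset hS₀)
    intro S hS
    have hS' : 0 < β S := by simpa using hS
    have hS𝕊 : S ∈ 𝕊 := by_contra fun h => by simp [hβ𝕊 S h] at hS'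
    refine mem_erase.mpr ⟨fun hSS₀ => ?_, hS𝕊⟩
    simp [hβdef, hSS₀, hS₀, m] at hS'
  have ihβ := ih _ (hn ▸ card_lt_card hsupp) β hβ rfl
  rw [hsplit, sum_add_indicator_mul, sum_maxSep_add_indicator_mul hβ hβ𝕊 hm.le]
  exact add_le_add ihβ (mul_le_mul_of_nonneg_left (h 𝕊) hm.le)

end MaxSep

theorem indicator_alphas_suffice_general {V : Type*} [Fintype V] [DecidableEq V]
    (y : Finset V → ℝ) (π : V → V → ℝ) :
    (∀ α : Finset V → ℝ, (∀ S, 0 ≤ α S) →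
      ∑ S : Finset V, α S * y S ≤ ∑ i : V, ∑ j : V, maxSep α i j * π i j) ↔
    (∀ 𝕊 : Finset (Finset V),
      ∑ S ∈ 𝕊, y S ≤ ∑ i : V, ∑ j : V, if SepFam 𝕊 i j then π i j else 0) := by
  refine ⟨fun h 𝕊 => ?_, sum_mul_le_sum_maxSep_mul⟩
  have h𝕊 := h (fun S => if S ∈ 𝕊 then 1 else 0) fun _ => by positivity
  simpa only [maxSep_indicator 𝕊 zero_le_one, ite_mul, one_mul, zero_mul, sum_ite_mem,
    univ_inter] using h𝕊

/-- in the Farkas feasibility condition it suffices to check `α`'s taking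
only one positive value: the family of inequalities
`∑_S α_S y_S ≤ ∑_{(i,j)} (max_{S⊙(i,j)} α_S) π_{ij}` over all nonnegative `α` is
equivalent to the family of inequalities
`∑_{S ∈ 𝕊} y_S ≤ ∑_{(i,j) : 𝕊⊙(i,j)} π_{ij}` over all families `𝕊 ⊆ 2^V`. -/
theorem indicator_alphas_suffice {V : Type*} [Fintype V] [DecidableEq V]
    (y : Finset V → ℝ) (hy : ∀ S, 0 ≤ y S)
    (π : V → V → ℝ) (hπ : ∀ i j, 0 ≤ π i j) :
    (∀ α : Finset V → ℝ, (∀ S, 0 ≤ α S) →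
      ∑ S : Finset V, α S * y S ≤ ∑ i : V, ∑ j : V, maxSep α i j * π i j) ↔
    (∀ 𝕊 : Finset (Finset V),
      ∑ S ∈ 𝕊, y S ≤ ∑ i : V, ∑ j : V, if SepFam 𝕊 i j then π i j else 0) :=
  indicator_alphas_suffice_general y π
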